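/- In a finite MDP, if there exists a strategy that is positively λ-synchronizing in T (for λ ∈ {always, eventually, weakly, strongly}), then the uniform strategy σ_u, which plays all actions uniformly at random at each step, is also positively λ-synchronizing in T. More specifically: if σ ⊆ σ_u in the sense of support inclusion of chosen actions after every history, then Supp(M^σ_i) ⊆ Supp(M^{σ_u}_i) for all i. -/

import Mathlib

/-! The probability of a finite path is the initial weight times a product of factors
`σ ρ q a * δ q a q'`, each nonnegative, so it is positive exactly when every factor is: whether
a path has positive probability depends only on the supports of the strategy. The uniform
strategy has full support, so every path that is possible under some strategy is possible under
`σ_u`, which gives `Supp(M^σ_i) ⊆ Supp(M^{σ_u}_i)`; positive synchronization in `T` only asks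
that `Supp(M^σ_i)` meet `T`. -/

open scoped BigOperators
open Classical Filter

/-- A finite Markov decision process with real transition probabilities. -/
structure MDP (Q A : Type) [Fintype Q] [Fintype A] where
  δ : Q → A → Q → ℝ
  δ_nonneg : ∀ q a q', 0 ≤ δ q a q'
  δ_sum : ∀ q a, ∑ q', δ q a q' = 1

namespace MDP

variable {Q A : Type} [Fintype Q] [Fintype A]

/-- `d` is a probability distribution. -/
def IsDist (d : Q → ℝ) : Prop := (∀ q, 0 ≤ d q) ∧ ∑ q, d q = 1

/-- A (randomized, history-dependent) strategy maps a history (list of past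
state-action pairs) and the current state to a distribution over actions. -/
def IsStrategy (σ : List (Q × A) → Q → A → ℝ) : Prop :=
  (∀ h q a, 0 ≤ σ h q a) ∧ ∀ h q, ∑ a, σ h q a = 1

/-- The probability of the finite path `qs` (with actions `as`) of length `i`,
under strategy `σ` from initial distribution `d0`. -/
noncomputable def pathProb (M : MDP Q A) (σ : List (Q × A) → Q → A → ℝ)
    (d0 : Q → ℝ) (i : ℕ) (qs : Fin (i + 1) → Q) (as : Fin i → A) : ℝ :=
  d0 (qs 0) * ∏ j : Fin i,
    (σ (List.ofFn (fun k : Fin j.val =>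
          (qs ⟨k.val, by have := k.isLt; have := j.isLt; omega⟩,
           as ⟨k.val, by have := k.isLt; have := j.isLt; omega⟩)))
        (qs j.castSucc) (as j))
      * M.δ (qs j.castSucc) (as j) (qs j.succ)

/-- The distribution over states after `i` steps (`M^σ_i`). -/
noncomputable def stepDist (M : MDP Q A) (σ : List (Q × A) → Q → A → ℝ)
    (d0 : Q → ℝ) (i : ℕ) (q : Q) : ℝ :=
  ∑ qs : Fin (i + 1) → Q, ∑ as : Fin i → A,
    if qs (Fin.last i) = q then M.pathProb σ d0 i qs as else 0

/-- The probability mass that a (sub)distribution assigns to a set `T`. -/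
noncomputable def mass (d : Q → ℝ) (T : Set Q) : ℝ := ∑ q, T.indicator d q

/-- The support of a (sub)distribution. -/
def supp {α : Type} (d : α → ℝ) : Set α := {q | 0 < d q}

/-- One-step sure predecessors of `Y`. -/
def Pre (M : MDP Q A) (Y : Set Q) : Set Q :=
  {q | ∃ a, ∀ q', 0 < M.δ q a q' → q' ∈ Y}

/-- Probability of reaching `T` within `i` steps. -/
noncomputable def reachProb (M : MDP Q A) (σ : List (Q × A) → Q → A → ℝ)
    (d0 : Q → ℝ) (T : Set Q) (i : ℕ) : ℝ :=
  ∑ qs : Fin (i + 1) → Q, ∑ as : Fin i → A,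
    if ∃ j, qs j ∈ T then M.pathProb σ d0 i qs as else 0

/-- `d0` is almost-sure winning for the reachability objective `◇T`:
some strategy reaches `T` with probability one. -/
def ASReach (M : MDP Q A) (d0 : Q → ℝ) (T : Set Q) : Prop :=
  ∃ σ, IsStrategy σ ∧ (⨆ i : ℕ, M.reachProb σ d0 T i) = 1

/-- `d0` is limit-sure eventually synchronizing in `T`. -/
def LimitSureEventually (M : MDP Q A) (d0 : Q → ℝ) (T : Set Q) : Prop :=
  ∀ ε > (0 : ℝ), ∃ σ, IsStrategy σ ∧ ∃ i, 1 - ε ≤ mass (M.stepDist σ d0 i) T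

/-- `d0` is almost-sure weakly synchronizing in `T`. -/
def ASWeakly (M : MDP Q A) (d0 : Q → ℝ) (T : Set Q) : Prop :=
  ∃ σ, IsStrategy σ ∧ ∀ ε > (0 : ℝ), {i : ℕ | 1 - ε ≤ mass (M.stepDist σ d0 i) T}.Infinite

/-- `d0` is almost-sure strongly synchronizing in `T`. -/
def ASStrongly (M : MDP Q A) (d0 : Q → ℝ) (T : Set Q) : Prop :=
  ∃ σ, IsStrategy σ ∧ ∀ ε > (0 : ℝ), ∃ N, ∀ i ≥ N, 1 - ε ≤ mass (M.stepDist σ d0 i) T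

/-- The uniform distribution on a set `S`. -/
noncomputable def uniformOn (S : Set Q) : Q → ℝ :=
  fun q => if q ∈ S then 1 / (S.ncard : ℝ) else 0

/-- The uniform strategy, playing all actions uniformly at random. -/
noncomputable def uniformStrategy (Q A : Type) [Fintype A] :
    List (Q × A) → Q → A → ℝ :=
  fun _ _ _ => 1 / (Fintype.card A : ℝ)

/-- Action `a` is allowed in `q` w.r.t. `S` if all its successors stay in `S`. -/
def Allowed (M : MDP Q A) (S : Set Q) (q : Q) (a : A) : Prop :=
  ∀ q', 0 < M.δ q a q' → q' ∈ S

/-- Edge relation within `S` given the allowed actions. -/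
def ECEdge (M : MDP Q A) (S : Set Q) (q q' : Q) : Prop :=
  q ∈ S ∧ q' ∈ S ∧ ∃ a, M.Allowed S q a ∧ 0 < M.δ q a q'

/-- `S` is an end-component: closed and strongly connected via allowed actions. -/
def IsEC (M : MDP Q A) (S : Set Q) : Prop :=
  (∀ q ∈ S, ∃ a, M.Allowed S q a) ∧
  ∀ q ∈ S, ∀ q' ∈ S, Relation.ReflTransGen (M.ECEdge S) q q'

/-- The union of all end-components. -/
def ECUnion (M : MDP Q A) : Set Q := ⋃₀ {S | M.IsEC S}

/-- Positive always synchronizing in `T`. -/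
def PosAlways (M : MDP Q A) (d0 : Q → ℝ) (T : Set Q) : Prop :=
  ∃ σ, IsStrategy σ ∧ ∀ i, 0 < mass (M.stepDist σ d0 i) T

/-- Positive eventually synchronizing in `T`. -/
def PosEvent (M : MDP Q A) (d0 : Q → ℝ) (T : Set Q) : Prop :=
  ∃ σ, IsStrategy σ ∧ ∃ i, 0 < mass (M.stepDist σ d0 i) T

/-- Positive weakly synchronizing in `T`. -/
def PosWeakly (M : MDP Q A) (d0 : Q → ℝ) (T : Set Q) : Prop :=
  ∃ σ, IsStrategy σ ∧ ∀ N, ∃ i ≥ N, 0 < mass (M.stepDist σ d0 i) T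

/-- Positive strongly synchronizing in `T`. -/
def PosStrongly (M : MDP Q A) (d0 : Q → ℝ) (T : Set Q) : Prop :=
  ∃ σ, IsStrategy σ ∧ ∃ N, ∀ i ≥ N, 0 < mass (M.stepDist σ d0 i) T

/-- Bounded always synchronizing in `T`. -/
def BndAlways (M : MDP Q A) (d0 : Q → ℝ) (T : Set Q) : Prop :=
  ∃ σ, IsStrategy σ ∧ ∃ ε > (0 : ℝ), ∀ i, ε < mass (M.stepDist σ d0 i) T

/-- Bounded eventually synchronizing in `T`. -/
def BndEvent (M : MDP Q A) (d0 : Q → ℝ) (T : Set Q) : Prop :=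
  ∃ σ, IsStrategy σ ∧ ∃ ε > (0 : ℝ), ∃ i, ε < mass (M.stepDist σ d0 i) T

/-- Bounded weakly synchronizing in `T`. -/
def BndWeakly (M : MDP Q A) (d0 : Q → ℝ) (T : Set Q) : Prop :=
  ∃ σ, IsStrategy σ ∧ ∃ ε > (0 : ℝ), ∀ N, ∃ i ≥ N, ε < mass (M.stepDist σ d0 i) T

/-- Bounded strongly synchronizing in `T`. -/
def BndStrongly (M : MDP Q A) (d0 : Q → ℝ) (T : Set Q) : Prop :=
  ∃ σ, IsStrategy σ ∧ ∃ ε > (0 : ℝ), ∃ N, ∀ i ≥ N, ε < mass (M.stepDist σ d0 i) T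
variable {σ τ : List (Q × A) → Q → A → ℝ} {d0 : Q → ℝ}

lemma pathProb_nonneg (M : MDP Q A) (hσ : ∀ h q a, 0 ≤ σ h q a) (hd0 : ∀ q, 0 ≤ d0 q)
    (i : ℕ) (qs : Fin (i + 1) → Q) (as : Fin i → A) :
    0 ≤ M.pathProb σ d0 i qs as :=
  mul_nonneg (hd0 _) (Finset.prod_nonneg fun _ _ => mul_nonneg (hσ _ _ _) (M.δ_nonneg _ _ _))

lemma stepDist_nonneg (M : MDP Q A) (hσ : ∀ h q a, 0 ≤ σ h q a) (hd0 : ∀ q, 0 ≤ d0 q)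
    (i : ℕ) (q : Q) : 0 ≤ M.stepDist σ d0 i q :=
  Finset.sum_nonneg fun qs _ => Finset.sum_nonneg fun as _ => by
    split_ifs
    exacts [M.pathProb_nonneg hσ hd0 i qs as, le_rfl]

theorem _root_.Finset.prod_pos_of_pos_imp {ι : Type*} {s : Finset ι} {f g : ι → ℝ}
    (hf : ∀ j ∈ s, 0 ≤ f j) (hfg : ∀ j ∈ s, 0 < f j → 0 < g j) (h : 0 < ∏ j ∈ s, f j) :
    0 < ∏ j ∈ s, g j :=
  Finset.prod_pos fun j hj =>
    hfg j hj ((hf j hj).lt_of_ne (Finset.prod_ne_zero_iff.mp h.ne' j hj).symm)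

lemma pathProb_pos_of_supp_subset (M : MDP Q A) (hσ : ∀ h q a, 0 ≤ σ h q a)
    (hστ : ∀ h q, supp (σ h q) ⊆ supp (τ h q)) {i : ℕ} {qs : Fin (i + 1) → Q} {as : Fin i → A}
    (hpos : 0 < M.pathProb σ d0 i qs as) : 0 < M.pathProb τ d0 i qs as := by
  have hstep_nonneg : ∀ (h : List (Q × A)) (q : Q) (a : A) (q' : Q), 0 ≤ σ h q a * M.δ q a q' :=
    fun h q a q' => mul_nonneg (hσ h q a) (M.δ_nonneg q a q')
  have hstep_pos : ∀ (h : List (Q × A)) (q : Q) (a : A) (q' : Q),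
      0 < σ h q a * M.δ q a q' → 0 < τ h q a * M.δ q a q' := fun h q a q' hpos =>
    have hδ := pos_of_mul_pos_right hpos (hσ h q a)
    mul_pos (hστ h q (pos_of_mul_pos_left hpos hδ.le)) hδ
  unfold pathProb at hpos ⊢
  have hd0 := pos_of_mul_pos_left hpos (Finset.prod_nonneg fun _ _ => hstep_nonneg ..)
  exact mul_pos hd0 (Finset.prod_pos_of_pos_imp (fun _ _ => hstep_nonneg ..)
    (fun _ _ => hstep_pos _ _ _ _) (pos_of_mul_pos_right hpos hd0.le))

lemma pathProb_le_stepDist (M : MDP Q A) (hσ : ∀ h q a, 0 ≤ σ h q a) (hd0 : ∀ q, 0 ≤ d0 q)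
    (i : ℕ) (qs : Fin (i + 1) → Q) (as : Fin i → A) :
    M.pathProb σ d0 i qs as ≤ M.stepDist σ d0 i (qs (Fin.last i)) := by
  have hterm : ∀ qs' as', 0 ≤
      if qs' (Fin.last i) = qs (Fin.last i) then M.pathProb σ d0 i qs' as' else 0 := by
    intro qs' as'
    split_ifs
    exacts [M.pathProb_nonneg hσ hd0 i qs' as', le_rfl]
  calc M.pathProb σ d0 i qs as
      = if qs (Fin.last i) = qs (Fin.last i) then M.pathProb σ d0 i qs as else 0 :=
        (if_pos rfl).symm
    _ ≤ ∑ as', if qs (Fin.last i) = qs (Fin.last i) then M.pathProb σ d0 i qs as' else 0 :=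
        Finset.single_le_sum (fun as' _ => hterm qs as') (Finset.mem_univ as)
    _ ≤ M.stepDist σ d0 i (qs (Fin.last i)) :=
        Finset.single_le_sum (fun qs' _ => Finset.sum_nonneg fun as' _ => hterm qs' as')
          (Finset.mem_univ qs)

lemma stepDist_supp_subset (M : MDP Q A) (hσ : ∀ h q a, 0 ≤ σ h q a) (hτ : ∀ h q a, 0 ≤ τ h q a)
    (hd0 : ∀ q, 0 ≤ d0 q) (hστ : ∀ h q, supp (σ h q) ⊆ supp (τ h q)) (i : ℕ) :
    supp (M.stepDist σ d0 i) ⊆ supp (M.stepDist τ d0 i) := by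
  intro q (hq : 0 < M.stepDist σ d0 i q)
  unfold stepDist at hq
  obtain ⟨qs, -, hqs⟩ := Finset.exists_lt_of_sum_lt (lt_of_eq_of_lt Finset.sum_const_zero hq)
  obtain ⟨as, -, has⟩ := Finset.exists_lt_of_sum_lt (lt_of_eq_of_lt Finset.sum_const_zero hqs)
  split_ifs at has with hlast
  · subst hlast
    exact (M.pathProb_pos_of_supp_subset hσ hστ has).trans_le
      (M.pathProb_le_stepDist hτ hd0 i qs as)
  · exact absurd has (lt_irrefl 0)

lemma mass_pos_iff {d : Q → ℝ} (hd : ∀ q, 0 ≤ d q) (T : Set Q) :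
    0 < mass d T ↔ (supp d ∩ T).Nonempty := by
  have hind : ∀ q ∈ Finset.univ, 0 ≤ T.indicator d q :=
    fun q _ => Set.indicator_nonneg (fun q _ => hd q) q
  rw [mass, Finset.sum_pos_iff_of_nonneg hind]
  constructor
  · rintro ⟨q, -, hq⟩
    have hqT : q ∈ T := Set.mem_of_indicator_ne_zero hq.ne'
    exact ⟨q, by rwa [Set.indicator_of_mem hqT] at hq, hqT⟩
  · rintro ⟨q, hq, hqT⟩
    exact ⟨q, Finset.mem_univ q, by rwa [Set.indicator_of_mem hqT]⟩

lemma mass_stepDist_pos_of_supp_subset (M : MDP Q A) (hσ : ∀ h q a, 0 ≤ σ h q a)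
    (hτ : ∀ h q a, 0 ≤ τ h q a) (hd0 : ∀ q, 0 ≤ d0 q) (hστ : ∀ h q, supp (σ h q) ⊆ supp (τ h q))
    (T : Set Q) {i : ℕ} (hpos : 0 < mass (M.stepDist σ d0 i) T) :
    0 < mass (M.stepDist τ d0 i) T := by
  rw [mass_pos_iff (M.stepDist_nonneg hσ hd0 i)] at hpos
  rw [mass_pos_iff (M.stepDist_nonneg hτ hd0 i)]
  exact hpos.mono (Set.inter_subset_inter_left T (M.stepDist_supp_subset hσ hτ hd0 hστ i))

lemma uniformStrategy_pos {S : Type} (h : List (S × A)) (q : S) (a : A) :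
    0 < uniformStrategy S A h q a := by
  have : Nonempty A := ⟨a⟩
  unfold uniformStrategy
  positivity

end MDP

open MDP in
theorem stmt11_general {Q A : Type} [Fintype Q] [Fintype A] (M : MDP Q A)
    (d0 : Q → ℝ) (hd0 : IsDist d0) (T : Set Q) :
    (∀ σ, IsStrategy σ →
      (∀ h q, supp (σ h q) ⊆ supp (uniformStrategy Q A h q)) →
      ∀ i, supp (M.stepDist σ d0 i) ⊆
        supp (M.stepDist (uniformStrategy Q A) d0 i)) ∧
    (M.PosAlways d0 T →
      ∀ i, 0 < mass (M.stepDist (uniformStrategy Q A) d0 i) T) ∧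
    (M.PosEvent d0 T →
      ∃ i, 0 < mass (M.stepDist (uniformStrategy Q A) d0 i) T) ∧
    (M.PosWeakly d0 T →
      ∀ N, ∃ i ≥ N, 0 < mass (M.stepDist (uniformStrategy Q A) d0 i) T) ∧
    (M.PosStrongly d0 T →
      ∃ N, ∀ i ≥ N, 0 < mass (M.stepDist (uniformStrategy Q A) d0 i) T) := by
  have hu := uniformStrategy_pos (S := Q) (A := A)
  have hmono : ∀ {σ}, IsStrategy σ → ∀ {i}, 0 < mass (M.stepDist σ d0 i) T →
      0 < mass (M.stepDist (uniformStrategy Q A) d0 i) T := fun hσ =>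
    M.mass_stepDist_pos_of_supp_subset hσ.1 (fun h q a => (hu h q a).le) hd0.1
      (fun h q a _ => hu h q a) T
  refine ⟨fun σ hσ hsupp i => ?_, ?_, ?_, ?_, ?_⟩
  · exact M.stepDist_supp_subset hσ.1 (fun h q a => (hu h q a).le) hd0.1 hsupp i
  · rintro ⟨σ, hσ, h⟩ i
    exact hmono hσ (h i)
  · rintro ⟨σ, hσ, i, h⟩
    exact ⟨i, hmono hσ h⟩
  · rintro ⟨σ, hσ, h⟩ N
    obtain ⟨i, hiN, hi⟩ := h N
    exact ⟨i, hiN, hmono hσ hi⟩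
  · rintro ⟨σ, hσ, N, h⟩
    exact ⟨N, fun i hi => hmono hσ (h i hi)⟩

open MDP in
/-- If some strategy is positively λ-synchronizing in `T`, then so is the
uniform strategy `σ_u` (for λ ∈ {always, eventually, weakly, strongly});
more specifically, `σ ⊆ σ_u` (support inclusion after every history) implies
`Supp(M^σ_i) ⊆ Supp(M^{σ_u}_i)` for all `i`. -/
theorem stmt11 {Q A : Type} [Fintype Q] [Fintype A] [Nonempty A] (M : MDP Q A)
    (d0 : Q → ℝ) (hd0 : IsDist d0) (T : Set Q) :
    (∀ σ, IsStrategy σ →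
      (∀ h q, supp (σ h q) ⊆ supp (uniformStrategy Q A h q)) →
      ∀ i, supp (M.stepDist σ d0 i) ⊆
        supp (M.stepDist (uniformStrategy Q A) d0 i)) ∧
    (M.PosAlways d0 T →
      ∀ i, 0 < mass (M.stepDist (uniformStrategy Q A) d0 i) T) ∧
    (M.PosEvent d0 T →
      ∃ i, 0 < mass (M.stepDist (uniformStrategy Q A) d0 i) T) ∧
    (M.PosWeakly d0 T →
      ∀ N, ∃ i ≥ N, 0 < mass (M.stepDist (uniformStrategy Q A) d0 i) T) ∧
    (M.PosStrongly d0 T →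
      ∃ N, ∀ i ≥ N, 0 < mass (M.stepDist (uniformStrategy Q A) d0 i) T) :=
  stmt11_general M d0 hd0 T
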